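/- arXiv:2604.24228 — 6 statements merged into one kernel-verified Lean document; each statement's English description precedes it below -/
import Mathlib

section
/- Let H be a graph each of whose connected components is a subdivided star, that is, a tree with at most one vertex of degree at least 3. If a graph G contains H as an induced subgraph and G' is a graph obtained from G by subdividing one edge, then G' also contains H as an induced subgraph. (Consequently, an induced copy of such an H cannot be destroyed by any sequence of edge subdivisions.) -/
open SimpleGraph

/-- The number of neighbors (degree) of a vertex, via `Set.ncard`. -/
noncomputable def ndeg {V : Type*} (G : SimpleGraph V) (v : V) : ℕ := (G.neighborSet v).ncard

/-- The graph obtained from `G` by subdividing the edge `uv`: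
the edge `uv` is deleted, a new vertex (`none`) is added, and it is joined to `u` and `v`. -/
def subdivide {V : Type*} (G : SimpleGraph V) (u v : V) : SimpleGraph (Option V) :=
  SimpleGraph.fromRel (fun x y =>
    (∃ a b : V, x = some a ∧ y = some b ∧ G.Adj a b ∧ ¬(a = u ∧ b = v) ∧ ¬(a = v ∧ b = u)) ∨
    (x = none ∧ (y = some u ∨ y = some v)))

/-!
If no edge of the copy of `H` in `G` is mapped onto `uv`, the copy survives the subdivision
unchanged. Otherwise the edge `ab` of `H` mapped onto `uv` is a bridge of the forest `H`, and since
a component of `H` has at most one vertex of degree at least 3, one side of `ab`, say that of `b`,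
has none: beyond `ab`, `H` continues from `b` as a path ending at a leaf. Subdividing `ab` or the
next edge `bc` of this path gives isomorphic graphs, so sliding the new vertex along the path to the
leaf shows that `H` embeds in its own subdivision at `ab`, which embeds in the subdivision of `G`
at `uv`.
-/

section

variable {α V : Type*} {H : SimpleGraph α} {G : SimpleGraph V}

@[simp]
lemma subdivide_adj_some_some {u v x y : V} :
    (subdivide G u v).Adj (some x) (some y) ↔
      G.Adj x y ∧ ¬(x = u ∧ y = v) ∧ ¬(x = v ∧ y = u) := by
  simp only [subdivide, fromRel_adj]
  grind [G.adj_symm, G.ne_of_adj]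

@[simp]
lemma subdivide_adj_none_some {u v x : V} :
    (subdivide G u v).Adj none (some x) ↔ x = u ∨ x = v := by
  simp [subdivide]

@[simp]
lemma subdivide_adj_some_none {u v x : V} :
    (subdivide G u v).Adj (some x) none ↔ x = u ∨ x = v := by
  simp [subdivide]

lemma subdivide_comm (u v : V) : subdivide G u v = subdivide G v u := by
  ext x y
  rcases x with _ | x <;> rcases y with _ | y <;> simp <;> tauto

def SimpleGraph.Embedding.subdivideMap (f : H ↪g G) {a b : α} {u v : V} (ha : f a = u)
    (hb : f b = v) : subdivide H a b ↪g subdivide G u v where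
  toFun := Option.map f
  inj' := Option.map_injective f.injective
  map_rel_iff' {x y} := by
    subst ha hb
    rcases x with _ | x <;> rcases y with _ | y <;> simp [f.injective.eq_iff]

def SimpleGraph.Embedding.toSubdivide (f : H ↪g G) {u v : V}
    (h : ∀ x y, H.Adj x y → f x = u → f y ≠ v) : H ↪g subdivide G u v where
  toFun x := some (f x)
  inj' := Option.some_injective V |>.comp f.injective
  map_rel_iff' {x y} := by
    simp only [Function.Embedding.coeFn_mk, subdivide_adj_some_some, f.map_adj_iff]
    exact ⟨And.left, fun hxy =>
      ⟨hxy, fun ⟨hx, hy⟩ => h x y hxy hx hy, fun ⟨hx, hy⟩ => h y x hxy.symm hy hx⟩⟩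

lemma nonempty_embedding_subdivide_of_neighborSet_eq_singleton {a b : α}
    (h : H.neighborSet b = {a}) : Nonempty (H ↪g subdivide H a b) := by
  classical
  have hadj : ∀ x, H.Adj b x ↔ x = a := fun x => by
    rw [← mem_neighborSet, h, Set.mem_singleton_iff]
  refine ⟨⟨⟨fun x => if x = b then none else some x, fun x y hxy => ?_⟩, fun {x y} => ?_⟩⟩
  · by_cases hx : x = b <;> by_cases hy : y = b <;> simp_all
  · change (subdivide H a b).Adj (if x = b then none else some x)
      (if y = b then none else some y) ↔ _
    by_cases hx : x = b <;> by_cases hy : y = b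
    · simp [hx, hy]
    · simp [hx, hy, hadj]
    · simp [hx, hy, H.adj_comm x, hadj]
    · simp [hx, hy]

/-- Swapping the new vertex with `b` moves it from the edge `ab` to the edge `bc`. -/
def subdivideIsoOfNeighborSetEqPair [DecidableEq α] {a b c : α} (hac : a ≠ c)
    (h : H.neighborSet b = {a, c}) : subdivide H a b ≃g subdivide H b c where
  toEquiv := Equiv.swap none (some b)
  map_rel_iff' {x y} := by
    have hadj : ∀ x, H.Adj b x ↔ x = a ∨ x = c := fun x => by
      rw [← mem_neighborSet, h, Set.mem_insert_iff, Set.mem_singleton_iff]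
    have hba : b ≠ a := H.ne_of_adj ((hadj a).2 (Or.inl rfl))
    rcases x with _ | x <;> rcases y with _ | y <;>
      (try by_cases hx : x = b) <;> (try by_cases hy : y = b) <;>
      simp [Equiv.swap_apply_of_ne_of_ne, H.adj_comm _ b, *] <;> grind

inductive SimpleGraph.PendantPath (H : SimpleGraph α) : α → α → Prop
  | leaf {a b : α} : H.neighborSet b = {a} → H.PendantPath a b
  | cons {a b c : α} : a ≠ c → H.neighborSet b = {a, c} → H.PendantPath b c → H.PendantPath a b

theorem SimpleGraph.PendantPath.nonempty_embedding_subdivide {a b : α} (h : H.PendantPath a b) :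
    Nonempty (H ↪g subdivide H a b) := by
  classical
  induction h with
  | leaf h => exact nonempty_embedding_subdivide_of_neighborSet_eq_singleton h
  | cons hac h _ ih =>
    exact ih.map (subdivideIsoOfNeighborSetEqPair hac h).symm.toEmbedding.comp

theorem SimpleGraph.IsAcyclic.setOf_reachable_deleteEdges_ssubset (hH : H.IsAcyclic)
    {a b c : α} (hbc : H.Adj b c) (hac : a ≠ c) :
    {z | (H.deleteEdges {s(b, c)}).Reachable c z} ⊂
      {z | (H.deleteEdges {s(a, b)}).Reachable b z} := by
  classical
  have hbridge : ¬(H.deleteEdges {s(b, c)}).Reachable c b := fun h =>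
    isBridge_iff.mp (isAcyclic_iff_forall_adj_isBridge.mp hH hbc) h.symm
  refine LE.le.ssubset_of_mem_notMem (fun z hz => ?_) Reachable.rfl hbridge
  obtain ⟨p, hp⟩ := reachable_deleteEdges_iff_exists_walk.mp hz
  have hpab : s(a, b) ∉ p.edges := fun h => hbridge <|
    reachable_deleteEdges_iff_exists_walk.mpr ⟨p.takeUntil b (p.snd_mem_support_of_mem_edges h),
      fun h' => hp (p.edges_takeUntil_subset_edges _ h')⟩
  refine reachable_deleteEdges_iff_exists_walk.mpr ⟨.cons hbc p, ?_⟩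
  simp [hpab, hac, hbc.ne]

theorem SimpleGraph.IsAcyclic.pendantPath [Finite α] (hH : H.IsAcyclic) {a b : α}
    (hab : H.Adj a b) (hdeg : ∀ z, (H.deleteEdges {s(a, b)}).Reachable b z → ndeg H z ≤ 2) :
    H.PendantPath a b := by
  induction hn : {z | (H.deleteEdges {s(a, b)}).Reachable b z}.ncard
    using Nat.strong_induction_on generalizing a b with
  | _ n ih =>
  have ha : a ∈ H.neighborSet b := hab.symm
  have hpos : 0 < ndeg H b := (Set.ncard_pos).mpr ⟨a, ha⟩
  obtain h1 | h2 : ndeg H b = 1 ∨ ndeg H b = 2 := by have := hdeg b .rfl; omega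
  · obtain ⟨x, hx⟩ := Set.ncard_eq_one.mp h1
    rw [hx, Set.mem_singleton_iff] at ha
    exact .leaf (ha ▸ hx)
  · obtain ⟨c, hac, hN⟩ : ∃ c, a ≠ c ∧ H.neighborSet b = {a, c} := by
      obtain ⟨x, y, hxy, hN⟩ := Set.ncard_eq_two.mp h2
      rw [hN] at ha
      rcases ha with rfl | rfl
      · exact ⟨y, hxy, hN⟩
      · exact ⟨x, hxy.symm, hN.trans (Set.pair_comm x a)⟩
    have hbc : H.Adj b c := by rw [← mem_neighborSet, hN]; simp
    have hsub := hH.setOf_reachable_deleteEdges_ssubset hbc hac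
    exact .cons hac hN
      (ih _ (hn ▸ Set.ncard_lt_ncard hsub) hbc (fun z hz => hdeg z (hsub.subset hz)) rfl)

theorem SimpleGraph.IsAcyclic.pendantPath_or_pendantPath [Finite α] (hH : H.IsAcyclic)
    (hstar : ∀ x y : α, 3 ≤ ndeg H x → 3 ≤ ndeg H y → H.Reachable x y → x = y) {a b : α}
    (hab : H.Adj a b) : H.PendantPath a b ∨ H.PendantPath b a := by
  have hside : ∀ {x y}, H.Adj x y → ¬H.PendantPath x y →
      ∃ z, (H.deleteEdges {s(x, y)}).Reachable y z ∧ 3 ≤ ndeg H z := fun hxy h => by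
    by_contra! hdeg
    exact h (hH.pendantPath hxy fun z hz => Nat.le_of_lt_succ (hdeg z hz))
  by_contra! h
  obtain ⟨z, hbz, hz⟩ := hside hab h.1
  obtain ⟨z', haz', hz'⟩ := hside hab.symm h.2
  rw [Sym2.eq_swap] at haz'
  have hle := deleteEdges_le (G := H) {s(a, b)}
  obtain rfl := hstar z z' hz hz'
    ((hbz.mono hle).symm.trans (hab.symm.reachable.trans (haz'.mono hle)))
  exact isBridge_iff.mp (isAcyclic_iff_forall_adj_isBridge.mp hH hab) (haz'.trans hbz.symm)

end

theorem subdividedStarForest_survives_subdivision_general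
    {α V : Type*} [Fintype α]
    (H : SimpleGraph α) (G : SimpleGraph V)
    (hforest : H.IsAcyclic)
    (hstar : ∀ x y : α, 3 ≤ ndeg H x → 3 ≤ ndeg H y → H.Reachable x y → x = y)
    (u v : V)
    (hind : Nonempty (H ↪g G)) :
    Nonempty (H ↪g subdivide G u v) := by
  obtain ⟨f⟩ := hind
  by_cases hedge : ∃ a b, H.Adj a b ∧ f a = u ∧ f b = v
  · obtain ⟨a, b, hab, rfl, rfl⟩ := hedge
    rcases hforest.pendantPath_or_pendantPath hstar hab with h | h
    · exact h.nonempty_embedding_subdivide.map (f.subdivideMap rfl rfl).comp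
    · rw [subdivide_comm]
      exact h.nonempty_embedding_subdivide.map (f.subdivideMap rfl rfl).comp
  · push Not at hedge
    exact ⟨f.toSubdivide hedge⟩

/-- If every connected component of `H` is a subdivided star (i.e. `H` is a forest in which
every component has at most one vertex of degree at least 3), `G` contains `H` as an induced
subgraph, and `G'` is obtained from `G` by subdividing one edge, then `G'` also contains `H`
as an induced subgraph. -/
theorem subdividedStarForest_survives_subdivision
    {α V : Type*} [Fintype α] [Fintype V]
    (H : SimpleGraph α) (G : SimpleGraph V)
    (hforest : H.IsAcyclic)
    (hstar : ∀ x y : α, 3 ≤ ndeg H x → 3 ≤ ndeg H y → H.Reachable x y → x = y)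
    (u v : V) (huv : G.Adj u v)
    (hind : Nonempty (H ↪g G)) :
    Nonempty (H ↪g subdivide G u v) :=
  subdividedStarForest_survives_subdivision_general H G hforest hstar u v hind
end

section
/- Let H be a graph each of whose connected components is a subdivided star. Then for every graph G, the following are equivalent: (i) some graph obtained from G by a (possibly empty) finite sequence of edge subdivisions is H-free; (ii) G itself is H-free. -/
open SimpleGraph

/-- `G` is `H`-free if it contains no induced subgraph isomorphic to `H`. -/
def HFree {α β : Type*} (H : SimpleGraph α) (G : SimpleGraph β) : Prop :=
  IsEmpty (H ↪g G)

/-- Bundled graphs. -/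
abbrev GraphB : Type 1 := Σ V : Type, SimpleGraph V

/-- One edge-subdivision step between (bundled) graphs, up to isomorphism. -/
def SubdivStep : GraphB → GraphB → Prop := fun p q =>
  ∃ u v : p.1, p.2.Adj u v ∧ Nonempty (q.2 ≃g subdivide p.2 u v)

/-!
If `H` embeds as an induced subgraph into `G`, it also embeds into the graph obtained by
subdividing an edge `uv` of `G`; by induction it then embeds into every iterated subdivision.
If `uv` is not the image under the embedding `f` of an edge `ab` of `H`, `f` itself survives.
Otherwise `ab` is a bridge of the forest `H`, and since the component of `ab` has at most one
vertex of degree `≥ 3`, one side of `ab`, say the side of `b`, has maximum degree `≤ 2`: it is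
a path `b = p₀, p₁, …, pₖ` hanging from `a`. Sending `b` to the subdivision vertex and each
`pᵢ` (`i ≥ 1`) to `f pᵢ₋₁` shifts this path one step towards `a` and embeds `H` into the
subdivision. The path structure is read off the distances to `b` in `H` minus the edge `ab`.
-/

namespace SimpleGraph

variable {α β : Type*}

section Subdivide

variable {H : SimpleGraph α} {G : SimpleGraph β} {u v : β}

@[simp]
lemma subdivide_adj_some_some {x y : β} :
    (subdivide G u v).Adj (some x) (some y) ↔
      G.Adj x y ∧ ¬(x = u ∧ y = v) ∧ ¬(x = v ∧ y = u) := by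
  simp only [subdivide, fromRel_adj]
  grind [G.adj_symm, G.ne_of_adj]

@[simp]
lemma subdivide_adj_none_some {x : β} : (subdivide G u v).Adj none (some x) ↔ x = u ∨ x = v := by
  simp [subdivide]

@[simp]
lemma subdivide_adj_some_none {x : β} : (subdivide G u v).Adj (some x) none ↔ x = u ∨ x = v := by
  rw [adj_comm, subdivide_adj_none_some]

lemma subdivide_comm : subdivide G u v = subdivide G v u := by
  ext (_ | x) (_ | y) <;>
    simp only [SimpleGraph.irrefl, subdivide_adj_none_some, subdivide_adj_some_none,
      subdivide_adj_some_some] <;> tauto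

def Embedding.mapSubdivide (f : H ↪g G) (a b : α) :
    _root_.subdivide H a b ↪g _root_.subdivide G (f a) (f b) where
  toFun := Option.map f
  inj' := Option.map_injective f.injective
  map_rel_iff' := by rintro (_ | x) (_ | y) <;> simp [f.injective.eq_iff]

def Embedding.someSubdivide (f : H ↪g G) (h : ¬∃ a b, f a = u ∧ f b = v) :
    H ↪g _root_.subdivide G u v where
  toFun := some ∘ f
  inj' := (Option.some_injective β).comp f.injective
  map_rel_iff' {a b} := by
    simp only [Function.Embedding.coeFn_mk, Function.comp_apply, subdivide_adj_some_some,
      map_adj_iff, and_iff_left_iff_imp]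
    exact fun _ => ⟨fun hu => h ⟨a, b, hu⟩, fun hv => h ⟨b, a, hv.2, hv.1⟩⟩

end Subdivide

lemma three_le_ndeg [Finite α] {H : SimpleGraph α} {v x y z : α} (hx : H.Adj v x)
    (hy : H.Adj v y) (hz : H.Adj v z) (hxy : x ≠ y) (hxz : x ≠ z) (hyz : y ≠ z) :
    3 ≤ ndeg H v := by
  have hcard : ({x, y, z} : Set α).ncard = 3 := Set.ncard_eq_three.mpr ⟨x, y, z, hxy, hxz, hyz, rfl⟩
  rw [ndeg, ← hcard]
  refine Set.ncard_le_ncard ?_ (Set.toFinite _)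
  rintro w (rfl | rfl | rfl) <;> assumption

section Parent

variable {T : SimpleGraph α} {r z w w₁ w₂ : α}

lemma IsAcyclic.dist_eq_length (hT : T.IsAcyclic) {u v : α} {p : T.Walk u v} (hp : p.IsPath) :
    T.dist u v = p.length := by
  obtain ⟨q, hq, hlen⟩ := p.reachable.exists_path_of_dist
  rw [← hlen, Subtype.mk.inj ((hT.subsingleton_path u v).elim ⟨p, hp⟩ ⟨q, hq⟩)]

lemma Reachable.exists_adj_dist_add_one (h : T.Reachable r z) (hz : z ≠ r) :
    ∃ w, T.Adj z w ∧ T.dist r w + 1 = T.dist r z := by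
  obtain ⟨p, -, hlen⟩ := h.exists_path_of_dist
  have hp : ¬p.Nil := fun hnil => hz hnil.eq.symm
  refine ⟨p.penultimate, (p.adj_penultimate hp).symm, ?_⟩
  have := dist_le p.dropLast
  have := p.length_dropLast_add_one hp
  have := (p.adj_penultimate hp).diff_dist_adj (u := r)
  omega

lemma IsAcyclic.eq_of_adj_of_dist_add_one (hT : T.IsAcyclic) (h₁ : T.Adj z w₁) (h₂ : T.Adj z w₂)
    (hd₁ : T.dist r w₁ + 1 = T.dist r z) (hd₂ : T.dist r w₂ + 1 = T.dist r z) : w₁ = w₂ := by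
  have hrz : T.Reachable r z := Reachable.of_dist_ne_zero (by omega)
  obtain ⟨p, hp, hlen⟩ := hrz.exists_path_of_dist
  have key : ∀ w, T.Adj z w → T.dist r w + 1 = T.dist r z → w = p.penultimate := by
    intro w hw hd
    refine hT.eq_penultimate_of_adj_end hp hw (by_contra fun hwp => ?_)
    have := hT.dist_eq_length (hp.concat hwp hw)
    rw [Walk.length_concat] at this
    omega
  rw [key w₁ h₁ hd₁, key w₂ h₂ hd₂]

-- `z` itself when no neighbour of `z` is closer to `r`: at the root, or outside its component.
open Classical in
noncomputable def parent (T : SimpleGraph α) (r z : α) : α :=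
  if h : ∃ w, T.Adj z w ∧ T.dist r w + 1 = T.dist r z then h.choose else z

lemma parent_spec (h : T.Reachable r z) (hz : z ≠ r) :
    T.Adj z (T.parent r z) ∧ T.dist r (T.parent r z) + 1 = T.dist r z := by
  have hex := h.exists_adj_dist_add_one hz
  rw [parent, dif_pos hex]
  exact hex.choose_spec

lemma IsAcyclic.parent_eq (hT : T.IsAcyclic) (hw : T.Adj z w) (hd : T.dist r w + 1 = T.dist r z) :
    T.parent r z = w := by
  have hex : ∃ w, T.Adj z w ∧ T.dist r w + 1 = T.dist r z := ⟨w, hw, hd⟩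
  rw [parent, dif_pos hex]
  exact hT.eq_of_adj_of_dist_add_one hex.choose_spec.1 hw hex.choose_spec.2 hd

lemma IsAcyclic.parent_eq_or_parent_eq (hT : T.IsAcyclic) (hw : T.Adj z w) (h : T.Reachable r z) :
    (T.dist r w + 1 = T.dist r z ∧ T.parent r z = w) ∨
      (T.dist r z + 1 = T.dist r w ∧ T.parent r w = z) := by
  rcases hT.dist_eq_dist_add_one_of_adj_of_reachable r hw h with hd | hd
  · exact Or.inl ⟨hd.symm, hT.parent_eq hw hd.symm⟩
  · exact Or.inr ⟨hd.symm, hT.parent_eq hw.symm hd.symm⟩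

end Parent

section Side

variable {H : SimpleGraph α} {a b x y z w : α}

def side (H : SimpleGraph α) (a b : α) : Set α :=
  {z | (H.deleteEdges {s(a, b)}).Reachable b z}

lemma self_mem_side : b ∈ H.side a b := Reachable.refl b

lemma mem_side_of_adj (hz : z ∈ H.side a b) (h : (H.deleteEdges {s(a, b)}).Adj z w) :
    w ∈ H.side a b :=
  hz.trans h.reachable

lemma parent_mem_side (hz : z ∈ H.side a b \ {b}) :
    (H.deleteEdges {s(a, b)}).parent b z ∈ H.side a b :=
  mem_side_of_adj hz.1 (parent_spec hz.1 hz.2).1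

lemma IsAcyclic.not_mem_side (hH : H.IsAcyclic) (hab : H.Adj a b) : a ∉ H.side a b :=
  fun h => isBridge_iff.mp (isAcyclic_iff_forall_adj_isBridge.mp hH hab) h.symm

lemma IsAcyclic.parent_ne (hH : H.IsAcyclic) (hab : H.Adj a b) (hz : z ∈ H.side a b \ {b}) :
    (H.deleteEdges {s(a, b)}).parent b z ≠ a :=
  ne_of_mem_of_not_mem (parent_mem_side hz) (hH.not_mem_side hab)

lemma IsAcyclic.adj_of_mem_side (hH : H.IsAcyclic) (hab : H.Adj a b) (hz : z ∈ H.side a b)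
    (h : H.Adj z w) : (z = b ∧ w = a) ∨ (H.deleteEdges {s(a, b)}).Adj z w := by
  by_cases he : s(z, w) = s(a, b)
  · rcases Sym2.eq_iff.mp he with ⟨rfl, -⟩ | hzw
    · exact absurd hz (hH.not_mem_side hab)
    · exact Or.inl hzw
  · exact Or.inr ((deleteEdges_adj ..).mpr ⟨h, he⟩)

lemma IsAcyclic.eq_of_adj_of_mem_side_of_not_mem (hH : H.IsAcyclic) (hab : H.Adj a b)
    (hz : z ∈ H.side a b) (hw : w ∉ H.side a b) (h : H.Adj z w) : z = b ∧ w = a :=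
  (hH.adj_of_mem_side hab hz h).resolve_right fun h' => hw (mem_side_of_adj hz h')

lemma IsAcyclic.deleteEdges_adj_of_mem_side (hH : H.IsAcyclic) (hab : H.Adj a b)
    (hz : z ∈ H.side a b) (hw : w ∈ H.side a b) (h : H.Adj z w) :
    (H.deleteEdges {s(a, b)}).Adj z w :=
  (hH.adj_of_mem_side hab hz h).resolve_left fun ⟨_, hwa⟩ => hH.not_mem_side hab (hwa ▸ hw)

lemma IsAcyclic.injOn_parent_side [Finite α] (hH : H.IsAcyclic) (hab : H.Adj a b)
    (hdeg : ∀ z ∈ H.side a b, ndeg H z ≤ 2) :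
    Set.InjOn ((H.deleteEdges {s(a, b)}).parent b) (H.side a b \ {b}) := by
  rintro x ⟨hx, hxb⟩ y ⟨hy, hyb⟩ hxy
  by_contra hne
  obtain ⟨hxp, hdx⟩ := parent_spec hx hxb
  obtain ⟨hyp, hdy⟩ := parent_spec hy hyb
  rw [← hxy] at hyp hdy
  set p := (H.deleteEdges {s(a, b)}).parent b x
  have hp : p ∈ H.side a b := parent_mem_side ⟨hx, hxb⟩
  -- Besides its children `x ≠ y`, the vertex `p` is adjacent to its own parent,
  -- or to `a` if it is the root `b`.
  obtain ⟨c, hc, hcx, hcy⟩ : ∃ c, H.Adj p c ∧ c ≠ x ∧ c ≠ y := by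
    by_cases hpb : p = b
    · refine ⟨a, by rw [hpb]; exact hab.symm, ?_, ?_⟩ <;> rintro rfl <;>
        exact hH.not_mem_side hab ‹_›
    · obtain ⟨hpp, hdp⟩ := parent_spec hp hpb
      refine ⟨_, deleteEdges_le _ hpp, ?_, ?_⟩ <;> rintro h <;> rw [h] at hdp <;> omega
  have := three_le_ndeg (deleteEdges_le _ hxp.symm) (deleteEdges_le _ hyp.symm) hc hne
    (Ne.symm hcx) (Ne.symm hcy)
  have := hdeg p hp
  omega

lemma IsAcyclic.adj_parent_iff [Finite α] (hH : H.IsAcyclic) (hab : H.Adj a b)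
    (hdeg : ∀ z ∈ H.side a b, ndeg H z ≤ 2) (hx : x ∈ H.side a b \ {b})
    (hy : y ∈ H.side a b \ {b}) :
    H.Adj ((H.deleteEdges {s(a, b)}).parent b x) ((H.deleteEdges {s(a, b)}).parent b y) ↔
      H.Adj x y := by
  have hT := hH.anti (deleteEdges_le {s(a, b)})
  have hxp := (parent_spec hx.1 hx.2).1
  have hyp := (parent_spec hy.1 hy.2).1
  have hpx := parent_mem_side hx
  have hpy := parent_mem_side hy
  constructor
  · intro h
    -- If the parent of `y` is the grandparent of `x` (or vice versa), uniqueness of children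
    -- forces `x` to be the parent of `y`.
    rcases hT.parent_eq_or_parent_eq (hH.deleteEdges_adj_of_mem_side hab hpx hpy h) hpx with
      ⟨hd, hpp⟩ | ⟨hd, hpp⟩
    · have hpb : (H.deleteEdges {s(a, b)}).parent b x ≠ b := by rintro hpb; simp [hpb] at hd
      rw [← hH.injOn_parent_side hab hdeg ⟨hpx, hpb⟩ hy hpp]
      exact deleteEdges_le _ hxp
    · have hpb : (H.deleteEdges {s(a, b)}).parent b y ≠ b := by rintro hpb; simp [hpb] at hd
      rw [← hH.injOn_parent_side hab hdeg ⟨hpy, hpb⟩ hx hpp]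
      exact (deleteEdges_le _ hyp).symm
  · intro h
    rcases hT.parent_eq_or_parent_eq (hH.deleteEdges_adj_of_mem_side hab hx.1 hy.1 h) hx.1 with
      ⟨-, hpx⟩ | ⟨-, hpy⟩
    · rw [hpx]; exact deleteEdges_le _ hyp
    · rw [hpy]; exact (deleteEdges_le _ hxp).symm

lemma IsAcyclic.adj_iff_parent_eq (hH : H.IsAcyclic) (hab : H.Adj a b)
    (hy : y ∈ H.side a b \ {b}) : H.Adj b y ↔ (H.deleteEdges {s(a, b)}).parent b y = b := by
  have hT := hH.anti (deleteEdges_le {s(a, b)})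
  constructor
  · intro h
    rcases hT.parent_eq_or_parent_eq (hH.deleteEdges_adj_of_mem_side hab self_mem_side hy.1 h)
      self_mem_side with ⟨hd, -⟩ | ⟨-, hpy⟩
    · simp at hd
    · exact hpy
  · intro h
    have := (parent_spec hy.1 hy.2).1
    rw [h] at this
    exact (deleteEdges_le _ this).symm

end Side

section Shift

variable {H : SimpleGraph α} {a b x y z : α}

open Classical in
noncomputable def shiftSide (H : SimpleGraph α) (a b z : α) : Option α :=
  if z = b then none
  else if z ∈ H.side a b then some ((H.deleteEdges {s(a, b)}).parent b z) else some z

lemma shiftSide_self : H.shiftSide a b b = none := if_pos rfl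

lemma shiftSide_of_mem (hz : z ∈ H.side a b \ {b}) :
    H.shiftSide a b z = some ((H.deleteEdges {s(a, b)}).parent b z) :=
  (if_neg hz.2).trans (if_pos hz.1)

lemma shiftSide_of_not_mem (hz : z ∉ H.side a b) : H.shiftSide a b z = some z :=
  (if_neg (ne_of_mem_of_not_mem self_mem_side hz).symm).trans (if_neg hz)

lemma shiftSide_cases (H : SimpleGraph α) (a b z : α) :
    (z = b ∧ H.shiftSide a b z = none) ∨
      (z ∈ H.side a b \ {b} ∧ H.shiftSide a b z = some ((H.deleteEdges {s(a, b)}).parent b z)) ∨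
      (z ∉ H.side a b ∧ H.shiftSide a b z = some z) := by
  by_cases hzb : z = b
  · exact Or.inl ⟨hzb, hzb ▸ shiftSide_self⟩
  by_cases hz : z ∈ H.side a b
  · exact Or.inr (Or.inl ⟨⟨hz, hzb⟩, shiftSide_of_mem ⟨hz, hzb⟩⟩)
  · exact Or.inr (Or.inr ⟨hz, shiftSide_of_not_mem hz⟩)

lemma IsAcyclic.shiftSide_injective [Finite α] (hH : H.IsAcyclic) (hab : H.Adj a b)
    (hdeg : ∀ z ∈ H.side a b, ndeg H z ≤ 2) : Function.Injective (H.shiftSide a b) := by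
  intro x y hxy
  rcases shiftSide_cases H a b x with ⟨hx, hgx⟩ | ⟨hx, hgx⟩ | ⟨hx, hgx⟩ <;>
  rcases shiftSide_cases H a b y with ⟨hy, hgy⟩ | ⟨hy, hgy⟩ | ⟨hy, hgy⟩ <;>
  simp only [hgx, hgy, reduceCtorEq, Option.some.injEq] at hxy
  · exact hx.trans hy.symm
  · exact hH.injOn_parent_side hab hdeg hx hy hxy
  · exact absurd (hxy ▸ parent_mem_side hx) hy
  · exact absurd (hxy ▸ parent_mem_side hy) hx
  · exact hxy

lemma IsAcyclic.subdivide_adj_none_shiftSide_iff (hH : H.IsAcyclic) (hab : H.Adj a b) :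
    (subdivide H a b).Adj none (H.shiftSide a b y) ↔ H.Adj b y := by
  rcases shiftSide_cases H a b y with ⟨rfl, hgy⟩ | ⟨hy, hgy⟩ | ⟨hy, hgy⟩ <;> rw [hgy]
  · simp
  · rw [subdivide_adj_none_some, hH.adj_iff_parent_eq hab hy, or_iff_right]
    exact hH.parent_ne hab hy
  · rw [subdivide_adj_none_some, or_iff_left ((ne_of_mem_of_not_mem self_mem_side hy).symm)]
    exact ⟨fun h => h ▸ hab.symm,
      fun h => (hH.eq_of_adj_of_mem_side_of_not_mem hab self_mem_side hy h).2⟩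

lemma IsAcyclic.not_subdivide_adj_parent (hH : H.IsAcyclic) (hab : H.Adj a b)
    (hx : x ∈ H.side a b \ {b}) (hy : y ∉ H.side a b) :
    ¬(subdivide H a b).Adj (some ((H.deleteEdges {s(a, b)}).parent b x)) (some y) := by
  rw [subdivide_adj_some_some]
  rintro ⟨h, -, hne⟩
  exact hne (hH.eq_of_adj_of_mem_side_of_not_mem hab (parent_mem_side hx) hy h)

lemma IsAcyclic.subdivide_adj_shiftSide_iff [Finite α] (hH : H.IsAcyclic) (hab : H.Adj a b)
    (hdeg : ∀ z ∈ H.side a b, ndeg H z ≤ 2) :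
    (subdivide H a b).Adj (H.shiftSide a b x) (H.shiftSide a b y) ↔ H.Adj x y := by
  have hcross {x y} (hx : x ∈ H.side a b \ {b}) (hy : y ∉ H.side a b) :
      ¬(subdivide H a b).Adj (H.shiftSide a b x) (H.shiftSide a b y) ∧ ¬H.Adj x y := by
    rw [shiftSide_of_mem hx, shiftSide_of_not_mem hy]
    exact ⟨hH.not_subdivide_adj_parent hab hx hy,
      fun h => hx.2 (hH.eq_of_adj_of_mem_side_of_not_mem hab hx.1 hy h).1⟩
  rcases shiftSide_cases H a b x with ⟨rfl, hgx⟩ | ⟨hx, hgx⟩ | ⟨hx, hgx⟩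
  · rw [hgx]; exact hH.subdivide_adj_none_shiftSide_iff hab
  all_goals rcases shiftSide_cases H a b y with ⟨rfl, hgy⟩ | ⟨hy, hgy⟩ | ⟨hy, hgy⟩
  · rw [hgy, adj_comm, H.adj_comm]; exact hH.subdivide_adj_none_shiftSide_iff hab
  · rw [hgx, hgy, subdivide_adj_some_some, ← hH.adj_parent_iff hab hdeg hx hy]
    simp [hH.parent_ne hab hx, hH.parent_ne hab hy]
  · exact iff_of_false (hcross hx hy).1 (hcross hx hy).2
  · rw [hgy, adj_comm, H.adj_comm]; exact hH.subdivide_adj_none_shiftSide_iff hab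
  · rw [adj_comm, H.adj_comm]; exact iff_of_false (hcross hy hx).1 (hcross hy hx).2
  · rw [hgx, hgy, subdivide_adj_some_some]
    simp [(ne_of_mem_of_not_mem self_mem_side hx).symm,
      (ne_of_mem_of_not_mem self_mem_side hy).symm]

end Shift

section Embedding

variable {H : SimpleGraph α} {G : SimpleGraph β} {a b : α} {u v : β}

noncomputable def IsAcyclic.shiftSideEmbedding [Finite α] (hH : H.IsAcyclic) (hab : H.Adj a b)
    (hdeg : ∀ z ∈ H.side a b, ndeg H z ≤ 2) : H ↪g subdivide H a b where
  toFun := H.shiftSide a b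
  inj' := hH.shiftSide_injective hab hdeg
  map_rel_iff' := hH.subdivide_adj_shiftSide_iff hab hdeg

lemma IsAcyclic.side_ndeg_le_two_or (hH : H.IsAcyclic)
    (hstar : ∀ x y, 3 ≤ ndeg H x → 3 ≤ ndeg H y → H.Reachable x y → x = y) (hab : H.Adj a b) :
    (∀ z ∈ H.side a b, ndeg H z ≤ 2) ∨ ∀ z ∈ H.side b a, ndeg H z ≤ 2 := by
  by_contra! ⟨⟨z, hz, hz3⟩, ⟨w, hw, hw3⟩⟩
  replace hw : (H.deleteEdges {s(a, b)}).Reachable a w := by rw [Sym2.eq_swap]; exact hw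
  have hzw : H.Reachable z w := (hz.mono (deleteEdges_le _)).symm.trans
    (hab.symm.reachable.trans (hw.mono (deleteEdges_le _)))
  obtain rfl := hstar z w (by omega) (by omega) hzw
  exact hH.not_mem_side hab (hz.trans hw.symm)

theorem IsAcyclic.nonempty_embedding_subdivide [Finite α] (hH : H.IsAcyclic)
    (hstar : ∀ x y, 3 ≤ ndeg H x → 3 ≤ ndeg H y → H.Reachable x y → x = y)
    (f : H ↪g G) (huv : G.Adj u v) : Nonempty (H ↪g subdivide G u v) := by
  by_cases hex : ∃ a b, f a = u ∧ f b = v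
  · obtain ⟨a, b, rfl, rfl⟩ := hex
    have hab : H.Adj a b := f.map_adj_iff.mp huv
    rcases hH.side_ndeg_le_two_or hstar hab with hdeg | hdeg
    · exact ⟨(hH.shiftSideEmbedding hab hdeg).trans (f.mapSubdivide a b)⟩
    · rw [subdivide_comm]
      exact ⟨(hH.shiftSideEmbedding hab.symm hdeg).trans (f.mapSubdivide b a)⟩
  · exact ⟨f.someSubdivide hex⟩

end Embedding

end SimpleGraph

lemma nonempty_embedding_of_reflTransGen_subdivStep {α : Type} [Finite α] {H : SimpleGraph α}
    (hH : H.IsAcyclic)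
    (hstar : ∀ x y, 3 ≤ ndeg H x → 3 ≤ ndeg H y → H.Reachable x y → x = y) {p q : GraphB}
    (hpq : Relation.ReflTransGen SubdivStep p q) (f : H ↪g p.2) : Nonempty (H ↪g q.2) := by
  induction hpq with
  | refl => exact ⟨f⟩
  | tail _ hstep ih =>
    obtain ⟨u, v, huv, ⟨e⟩⟩ := hstep
    obtain ⟨f'⟩ := ih
    obtain ⟨g⟩ := hH.nonempty_embedding_subdivide hstar f' huv
    exact ⟨g.trans e.symm.toEmbedding⟩

theorem subdividedStarForest_free_iff_subdivision_free_general
    {α V : Type} [Fintype α]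
    (H : SimpleGraph α) (G : SimpleGraph V)
    (hforest : H.IsAcyclic)
    (hstar : ∀ x y : α, 3 ≤ ndeg H x → 3 ≤ ndeg H y → H.Reachable x y → x = y) :
    (∃ q : GraphB, Relation.ReflTransGen SubdivStep ⟨V, G⟩ q ∧ HFree H q.2) ↔ HFree H G := by
  refine ⟨fun ⟨q, hq, hfree⟩ => ⟨fun f => ?_⟩, fun h => ⟨⟨V, G⟩, .refl, h⟩⟩
  obtain ⟨g⟩ := nonempty_embedding_of_reflTransGen_subdivStep hforest hstar hq f
  exact hfree.false g

/-- Let `H` be a graph each of whose connected components is a subdivided star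
(i.e. `H` is a forest and in each component there is at most one vertex of degree at
least 3).  Then some graph obtained from `G` by a (possibly empty) finite sequence of
edge subdivisions is `H`-free if and only if `G` itself is `H`-free. -/
theorem subdividedStarForest_free_iff_subdivision_free
    {α V : Type} [Fintype α] [Fintype V]
    (H : SimpleGraph α) (G : SimpleGraph V)
    (hforest : H.IsAcyclic)
    (hstar : ∀ x y : α, 3 ≤ ndeg H x → 3 ≤ ndeg H y → H.Reachable x y → x = y) :
    (∃ q : GraphB, Relation.ReflTransGen SubdivStep ⟨V, G⟩ q ∧ HFree H q.2) ↔ HFree H G :=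
  subdividedStarForest_free_iff_subdivision_free_general H G hforest hstar
end

section
/- Let H be a graph with minimum degree at least 2 such that for every vertex x of degree exactly 2 in H, the two neighbors of x are adjacent in H (the neighborhood of every degree-2 vertex induces a K₂). Let G be a graph and F ⊆ E(G) a set of edges such that G − F is H-free. Let G' be the graph obtained from G by subdividing each edge of F exactly once. Then G' is H-free. -/
open SimpleGraph

/-- The graph obtained from `G` by subdividing each edge in the set `F` exactly once:
for each `e ∈ F` a fresh vertex is added, joined to the two endpoints of `e`, and the
edges of `F` themselves are removed. -/
def subdivideSet {V : Type*} (G : SimpleGraph V) (F : Set (Sym2 V)) :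
    SimpleGraph (V ⊕ ↥F) :=
  SimpleGraph.fromRel (fun x y =>
    (∃ a b : V, x = Sum.inl a ∧ y = Sum.inl b ∧ G.Adj a b ∧ s(a, b) ∉ F) ∨
    (∃ (e : ↥F) (a : V), x = Sum.inr e ∧ y = Sum.inl a ∧ a ∈ (e : Sym2 V)))

/-!
A vertex of `H` cannot be mapped to a subdivision vertex `w` by an induced embedding: `w` has
at most two neighbours and they are non-adjacent, whereas a vertex of `H` has degree at least
two and, if exactly two, adjacent neighbours. So every copy of `H` in the subdivision lies on
the original vertices, where the subdivision induces exactly `G − F`.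
-/

section Subdivision

variable {V : Type*} (G : SimpleGraph V) (F : Set (Sym2 V))

lemma subdivideSet_adj_inl_inl (a b : V) :
    (subdivideSet G F).Adj (.inl a) (.inl b) ↔ G.Adj a b ∧ s(a, b) ∉ F := by
  simp only [subdivideSet, fromRel_adj, ne_eq, Sum.inl.injEq, reduceCtorEq, false_and,
    exists_false, or_false, exists_and_left, exists_eq_left']
  constructor
  · rintro ⟨-, h | h⟩
    · exact h
    · rw [Sym2.eq_swap]
      exact ⟨h.1.symm, h.2⟩
  · exact fun h => ⟨h.1.ne, .inl h⟩

lemma subdivideSet_adj_inr_inl (e : F) (a : V) :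
    (subdivideSet G F).Adj (.inr e) (.inl a) ↔ a ∈ (e : Sym2 V) := by
  simp [subdivideSet]

lemma subdivideSet_not_adj_inr_inr (e f : F) : ¬ (subdivideSet G F).Adj (.inr e) (.inr f) := by
  simp [subdivideSet]

def subdivideSetInl : G.deleteEdges F ↪g subdivideSet G F where
  toFun := Sum.inl
  inj' := Sum.inl_injective
  map_rel_iff' := by simp [subdivideSet_adj_inl_inl]

lemma subdivideSet_neighborSet_inr_subset {a b : V} (e : F) (he : (e : Sym2 V) = s(a, b)) :
    (subdivideSet G F).neighborSet (.inr e) ⊆ {.inl a, .inl b} := by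
  rintro (c | f) hc
  · rw [mem_neighborSet, subdivideSet_adj_inr_inl, he, Sym2.mem_iff] at hc
    rcases hc with rfl | rfl <;> simp
  · exact absurd hc (subdivideSet_not_adj_inr_inr G F e f)

lemma exists_neighborSet_inr_subset_pair_not_adj (e : F) :
    ∃ u v, (subdivideSet G F).neighborSet (.inr e) ⊆ {u, v} ∧
      ¬ (subdivideSet G F).Adj u v := by
  induction hab : (e : Sym2 V) using Sym2.ind with
  | h a b =>
    refine ⟨.inl a, .inl b, subdivideSet_neighborSet_inr_subset G F e hab, ?_⟩
    rw [subdivideSet_adj_inl_inl]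
    exact fun h => h.2 (hab ▸ e.2)

end Subdivision

namespace SimpleGraph.Embedding

variable {α β γ : Type*} {H : SimpleGraph α} {G : SimpleGraph β} {G' : SimpleGraph γ}

lemma nonempty_of_range_subset (ψ : G ↪g G') (φ : H ↪g G')
    (h : Set.range φ ⊆ Set.range ψ) : Nonempty (H ↪g G) := by
  choose f hf using fun x => h (Set.mem_range_self x)
  have map_adj : ∀ x y, G.Adj (f x) (f y) ↔ H.Adj x y := fun x y => by
    rw [← ψ.map_adj_iff, hf, hf, φ.map_adj_iff]
  exact ⟨⟨⟨f, fun x y hxy => φ.injective (by rw [← hf, ← hf, hxy])⟩, map_adj _ _⟩⟩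

lemma not_neighborSet_subset_pair_not_adj (φ : H ↪g G) {x : α}
    (hx : 2 ≤ ndeg H x)
    (hK2 : ∀ y z, ndeg H x = 2 → H.Adj x y → H.Adj x z → y ≠ z → H.Adj y z)
    {u v : β} (hN : G.neighborSet (φ x) ⊆ {u, v}) (huv : ¬ G.Adj u v) : False := by
  have himage : φ '' H.neighborSet x ⊆ {u, v} := by
    rintro _ ⟨y, hy, rfl⟩
    exact hN (φ.map_adj_iff.2 hy)
  have hdeg : ndeg H x = 2 := by
    refine le_antisymm ?_ hx
    calc ndeg H x = (φ '' H.neighborSet x).ncard :=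
          (Set.ncard_image_of_injective _ φ.injective).symm
      _ ≤ ({u, v} : Set β).ncard := Set.ncard_le_ncard himage (Set.toFinite _)
      _ ≤ ({v} : Set β).ncard + 1 := Set.ncard_insert_le u {v}
      _ = 2 := by rw [Set.ncard_singleton]
  obtain ⟨y, z, hyz, hyz_eq⟩ := Set.ncard_eq_two.1 hdeg
  have hy : H.Adj x y := by simp [← mem_neighborSet, hyz_eq]
  have hz : H.Adj x z := by simp [← mem_neighborSet, hyz_eq]
  have hφ : G.Adj (φ y) (φ z) := φ.map_adj_iff.2 (hK2 y z hdeg hy hz hyz)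
  rcases himage ⟨y, hy, rfl⟩ with hφy | hφy <;>
    rcases himage ⟨z, hz, rfl⟩ with hφz | hφz <;>
    rw [hφy, hφz] at hφ
  exacts [hφ.ne rfl, huv hφ, huv hφ.symm, hφ.ne rfl]

end SimpleGraph.Embedding

theorem subdivide_deletion_set_HFree_general
    {α V : Type*}
    (H : SimpleGraph α)
    (hmin : ∀ x : α, 2 ≤ ndeg H x)
    (hK2 : ∀ x y z : α, ndeg H x = 2 → H.Adj x y → H.Adj x z → y ≠ z → H.Adj y z)
    (G : SimpleGraph V) (F : Set (Sym2 V))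
    (hfree : HFree H (G.deleteEdges F)) :
    HFree H (subdivideSet G F) := by
  refine ⟨fun φ => hfree.false ?_⟩
  suffices hrange : Set.range φ ⊆ Set.range Sum.inl from
    ((subdivideSetInl G F).nonempty_of_range_subset φ hrange).some
  rintro _ ⟨x, rfl⟩
  cases hx : φ x with
  | inl a => exact ⟨a, rfl⟩
  | inr e =>
    obtain ⟨u, v, hN, huv⟩ := exists_neighborSet_inr_subset_pair_not_adj G F e
    exact (φ.not_neighborSet_subset_pair_not_adj (hmin x) (hK2 x) (hx ▸ hN) huv).elim

/-- Let `H` be a graph with minimum degree at least 2 in which the two neighbors of every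
degree-2 vertex are adjacent (the neighborhood of every degree-2 vertex induces a `K₂`).
If `F` is a set of edges of `G` such that `G − F` is `H`-free, then the graph obtained from
`G` by subdividing each edge of `F` exactly once is `H`-free. -/
theorem subdivide_deletion_set_HFree
    {α V : Type*} [Fintype α] [Fintype V]
    (H : SimpleGraph α)
    (hmin : ∀ x : α, 2 ≤ ndeg H x)
    (hK2 : ∀ x y z : α, ndeg H x = 2 → H.Adj x y → H.Adj x z → y ≠ z → H.Adj y z)
    (G : SimpleGraph V) (F : Set (Sym2 V)) (hF : F ⊆ G.edgeSet)
    (hfree : HFree H (G.deleteEdges F)) :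
    HFree H (subdivideSet G F) :=
  subdivide_deletion_set_HFree_general H hmin hK2 G F hfree
end

section
/- Let H be a graph containing at least one cycle, and suppose that the set of vertices of H of degree at least 3 induces a subgraph of H with at most one edge. Then every cycle of H contains a vertex whose degree in H is exactly 2. In particular, every shortest cycle of H contains a vertex of degree exactly 2. -/
open SimpleGraph

/-!
At the base vertex `u` of a cycle the two cycle edges `u — snd` and `penultimate — u` are
distinct, so a vertex set spanning at most one edge cannot contain all three of these vertices.
Applied to the vertices of degree at least 3, some vertex of the cycle has degree at most 2;
on a cycle every vertex has degree at least 2.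
-/

namespace SimpleGraph.Walk.IsCycle

variable {α : Type*} {H : SimpleGraph α} {u : α} {c : H.Walk u u}

lemma two_le_ndeg [Finite α] (hc : c.IsCycle) {w : α} (hw : w ∈ c.support) : 2 ≤ ndeg H w :=
  calc 2 = (c.toSubgraph.neighborSet w).ncard := (hc.ncard_neighborSet_toSubgraph_eq_two hw).symm
    _ ≤ ndeg H w := Set.ncard_le_ncard (c.toSubgraph.neighborSet_subset w) (Set.toFinite _)

lemma exists_mem_support_notMem (hc : c.IsCycle) {S : Set α}
    (hS : ∀ x y x' y' : α, x ∈ S → y ∈ S → x' ∈ S → y' ∈ S → H.Adj x y → H.Adj x' y' →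
      s(x, y) = s(x', y')) :
    ∃ w ∈ c.support, w ∉ S := by
  by_contra! hall
  have hsnd : H.Adj u c.snd := c.adj_snd hc.not_nil
  have hpen : H.Adj u c.penultimate := (c.adj_penultimate hc.not_nil).symm
  have hedge := hS u c.snd u c.penultimate (hall u c.start_mem_support)
    (hall _ (c.getVert_mem_support 1)) (hall u c.start_mem_support)
    (hall _ (c.getVert_mem_support _)) hsnd hpen
  rcases Sym2.eq_iff.mp hedge with ⟨-, heq⟩ | ⟨hu, -⟩
  · exact hc.snd_ne_penultimate heq
  · exact hpen.ne hu

end SimpleGraph.Walk.IsCycle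

theorem cycle_has_degree_two_vertex_general
    {α : Type*} [Fintype α] (H : SimpleGraph α)
    (honeEdge : ∀ x y x' y' : α, 3 ≤ ndeg H x → 3 ≤ ndeg H y → 3 ≤ ndeg H x' →
      3 ≤ ndeg H y' → H.Adj x y → H.Adj x' y' → s(x, y) = s(x', y')) :
    (∀ (u : α) (c : H.Walk u u), c.IsCycle → ∃ w ∈ c.support, ndeg H w = 2) ∧
    (∀ (u : α) (c : H.Walk u u), c.IsCycle → (c.length : ℕ∞) = H.girth →
      ∃ w ∈ c.support, ndeg H w = 2) := by
  have onCycle (u : α) (c : H.Walk u u) (hc : c.IsCycle) : ∃ w ∈ c.support, ndeg H w = 2 := by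
    obtain ⟨w, hw, hlow⟩ := hc.exists_mem_support_notMem (S := {v | 3 ≤ ndeg H v}) honeEdge
    exact ⟨w, hw, le_antisymm (Nat.lt_succ_iff.mp (not_le.mp hlow)) (hc.two_le_ndeg hw)⟩
  exact ⟨onCycle, fun u c hc _ => onCycle u c hc⟩

/-- Let `H` be a graph containing at least one cycle such that the set of vertices of degree
at least 3 induces a subgraph with at most one edge.  Then every cycle of `H` contains a
vertex of degree exactly 2; in particular every shortest cycle (one whose length equals the
girth) contains a vertex of degree exactly 2. -/
theorem cycle_has_degree_two_vertex
    {α : Type*} [Fintype α] (H : SimpleGraph α)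
    (hcyc : ¬ H.IsAcyclic)
    (honeEdge : ∀ x y x' y' : α, 3 ≤ ndeg H x → 3 ≤ ndeg H y → 3 ≤ ndeg H x' →
      3 ≤ ndeg H y' → H.Adj x y → H.Adj x' y' → s(x, y) = s(x', y')) :
    (∀ (u : α) (c : H.Walk u u), c.IsCycle → ∃ w ∈ c.support, ndeg H w = 2) ∧
    (∀ (u : α) (c : H.Walk u u), c.IsCycle → (c.length : ℕ∞) = H.girth →
      ∃ w ∈ c.support, ndeg H w = 2) :=
  cycle_has_degree_two_vertex_general H honeEdge
end

section
/- Let H be a graph in which the set of vertices of degree at least 3 induces a subgraph with at most one edge, and suppose H contains a roof triangle, i.e., a triangle with exactly two vertices of degree at least 3 in H; let a and b be these two vertices. Then every roof triangle of H contains a and b, and every vertex of H that lies on some roof triangle and is different from a and b has degree exactly 2 in H and its neighborhood is exactly {a, b}. Consequently, if X denotes the set of all vertices of H belonging to some roof triangle, then H[X] is a book graph with common edge ab: a and b are adjacent, and every other vertex of X is adjacent precisely to a and b. -/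
open SimpleGraph

/-- Three pairwise adjacent vertices. -/
def IsTriangle {α : Type*} (H : SimpleGraph α) (x y z : α) : Prop :=
  H.Adj x y ∧ H.Adj y z ∧ H.Adj x z

/-- A roof triangle: a triangle containing exactly two vertices of degree at least 3. -/
def IsRoofTriangle {α : Type*} (H : SimpleGraph α) (x y z : α) : Prop :=
  IsTriangle H x y z ∧ (({x, y, z} : Set α) ∩ {w | 3 ≤ ndeg H w}).ncard = 2

/-!
The two vertices of degree at least 3 on a roof triangle are adjacent, so by the one-edge
hypothesis they are `a` and `b`. Any other vertex `w` of a roof triangle is then adjacent to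
both `a` and `b` and has degree at most 2, so its neighbourhood is exactly `{a, b}`.
-/

section

variable {α : Type*} {H : SimpleGraph α}

lemma IsTriangle.adj_of_mem {x y z u v : α} (ht : IsTriangle H x y z)
    (hu : u ∈ ({x, y, z} : Set α)) (hv : v ∈ ({x, y, z} : Set α)) (huv : u ≠ v) :
    H.Adj u v := by
  obtain ⟨hxy, hyz, hxz⟩ := ht
  rcases hu with rfl | rfl | rfl <;> rcases hv with rfl | rfl | rfl <;>
    first
      | exact absurd rfl huv
      | assumption
      | exact hxy.symm
      | exact hyz.symm
      | exact hxz.symm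

lemma IsRoofTriangle.inter_eq_pair {x y z a b : α} (hr : IsRoofTriangle H x y z)
    (hedge : ∀ u v, 3 ≤ ndeg H u → 3 ≤ ndeg H v → H.Adj u v → s(u, v) = s(a, b)) :
    ({x, y, z} : Set α) ∩ {w | 3 ≤ ndeg H w} = {a, b} := by
  obtain ⟨u, v, huv, hset⟩ := Set.ncard_eq_two.mp hr.2
  have hu : u ∈ ({x, y, z} : Set α) ∩ {w | 3 ≤ ndeg H w} := hset ▸ Set.mem_insert u {v}
  have hv : v ∈ ({x, y, z} : Set α) ∩ {w | 3 ≤ ndeg H w} := hset ▸ Set.mem_insert_of_mem u rfl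
  rw [hset]
  exact Set.pair_eq_pair_iff.mpr <| Sym2.eq_iff.mp <|
    hedge u v hu.2 hv.2 (hr.1.adj_of_mem hu.1 hv.1 huv)

lemma neighborSet_eq_pair_of_ndeg_le_two {w a b : α} (hfin : (H.neighborSet w).Finite)
    (hab : a ≠ b) (hwa : H.Adj w a) (hwb : H.Adj w b) (hdeg : ndeg H w ≤ 2) :
    H.neighborSet w = {a, b} := by
  have hsub : ({a, b} : Set α) ⊆ H.neighborSet w := Set.insert_subset hwa (by simpa using hwb)
  exact (Set.eq_of_subset_of_ncard_le hsub (by rwa [Set.ncard_pair hab]) hfin).symm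

end

/-- Let `H` be a graph whose vertices of degree at least 3 induce a subgraph with at most
one edge, containing a roof triangle with attachment vertices `a` and `b`.  Then `a` and `b`
are adjacent, every roof triangle of `H` contains both `a` and `b`, and every vertex on a
roof triangle other than `a`, `b` has degree exactly 2 with neighborhood `{a, b}`
(so the union of the roof triangles induces a book graph with common edge `ab`). -/
theorem roof_triangles_form_book
    {α : Type*} [Fintype α] (H : SimpleGraph α) (a b : α)
    (honeEdge : ∀ x y x' y' : α, 3 ≤ ndeg H x → 3 ≤ ndeg H y → 3 ≤ ndeg H x' →
      3 ≤ ndeg H y' → H.Adj x y → H.Adj x' y' → s(x, y) = s(x', y'))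
    (hroof : ∃ z : α, IsRoofTriangle H a b z ∧ 3 ≤ ndeg H a ∧ 3 ≤ ndeg H b) :
    H.Adj a b ∧
    (∀ x y z : α, IsRoofTriangle H x y z →
        (a = x ∨ a = y ∨ a = z) ∧ (b = x ∨ b = y ∨ b = z)) ∧
    (∀ x y z w : α, IsRoofTriangle H x y z → (w = x ∨ w = y ∨ w = z) →
        w ≠ a → w ≠ b → ndeg H w = 2 ∧ H.neighborSet w = {a, b}) := by
  obtain ⟨-, ⟨⟨hab, -, -⟩, -⟩, ha3, hb3⟩ := hroof
  have hhigh {x y z : α} (hr : IsRoofTriangle H x y z) :=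
    hr.inter_eq_pair fun u v hu hv huv => honeEdge u v a b hu hv ha3 hb3 huv hab
  have hmem {x y z : α} (hr : IsRoofTriangle H x y z) :
      a ∈ ({x, y, z} : Set α) ∧ b ∈ ({x, y, z} : Set α) := by
    obtain ⟨ha, hb⟩ :=
      Set.insert_subset_iff.mp ((hhigh hr).symm.subset.trans Set.inter_subset_left)
    exact ⟨ha, Set.singleton_subset_iff.mp hb⟩
  refine ⟨hab, fun x y z hr => hmem hr, fun x y z w hr hw hwa hwb => ?_⟩
  have hlow : ndeg H w ≤ 2 := by
    by_contra! hw3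
    have : w ∈ ({a, b} : Set α) := hhigh hr ▸ ⟨hw, hw3⟩
    rcases this with rfl | rfl <;> contradiction
  have hN := neighborSet_eq_pair_of_ndeg_le_two (Set.toFinite _) hab.ne
    (hr.1.adj_of_mem hw (hmem hr).1 hwa) (hr.1.adj_of_mem hw (hmem hr).2 hwb) hlow
  exact ⟨by rw [ndeg, hN, Set.ncard_pair hab.ne], hN⟩
end

section
/- Let H be a graph containing at least one cycle, let g be the girth of H, and let e be an edge of H that lies on at least one cycle of H of length g. Let Q be the graph obtained from H by subdividing the edge e once. Then the number of cycles of length g in Q is strictly smaller than the number of cycles of length g in H, and the girth of Q is at least g. Consequently, Q contains no subgraph isomorphic to H; in particular, Q contains no induced subgraph isomorphic to H. -/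
/-!
Subdividing `uv` leaves every cycle of `H` avoiding `uv` intact and lengthens every cycle through
`uv` by one; conversely a cycle of `Q` through the new vertex comes from a cycle of `H` through
`uv`, and any other cycle of `Q` is a cycle of `H - uv`. Hence `Q` has girth at least `g`, and its
`g`-cycles are `g`-cycles of `H - uv`, which miss the `g`-cycle of `H` through `uv`. An injective
homomorphism `H → Q` would map the `g`-cycles of `H` injectively onto `g`-cycles of `Q`, which is
impossible since `Q` has fewer of them.
-/

open SimpleGraph

/-- The edge sets of the cycles of length `g` in `G`.  A cycle, viewed as a subgraph
(i.e. up to rotation and reflection), is determined by its edge set, so the cardinality of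
this collection is the number of cycles of length `g` in `G`. -/
def cycleEdgeSets {V : Type*} (G : SimpleGraph V) (g : ℕ) : Set (Set (Sym2 V)) :=
  {s | ∃ (u : V) (c : G.Walk u u), c.IsCycle ∧ c.length = g ∧ s = {e | e ∈ c.edges}}

namespace SimpleGraph

variable {V W : Type*} {G : SimpleGraph V} {G' : SimpleGraph W}

theorem Walk.exists_map_eq_of_support_subset_range (f : G ↪g G') {x y : W} (p : G'.Walk x y)
    (hp : ∀ z ∈ p.support, z ∈ Set.range f) {a b : V} (ha : f a = x) (hb : f b = y) :
    ∃ q : G.Walk a b, (q.map f.toHom).copy ha hb = p := by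
  induction p generalizing a with
  | nil =>
    obtain rfl := f.injective (ha.trans hb.symm)
    exact ⟨.nil, by subst ha; rfl⟩
  | cons h p ih =>
    subst ha hb
    obtain ⟨c, rfl⟩ := hp _ (List.mem_cons_of_mem _ p.start_mem_support)
    obtain ⟨q, hq⟩ := ih (fun z hz => hp z (List.mem_cons_of_mem _ hz)) rfl rfl
    refine ⟨.cons (f.map_adj_iff.mp h) q, ?_⟩
    simp only [Walk.copy_rfl_rfl] at hq ⊢
    simp [hq]

theorem Walk.exists_isCycle_cons_of_isPath_deleteEdges {s : Set (Sym2 V)} {a b : V}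
    (hab : G.Adj a b) (he : s(a, b) ∈ s) (q : (G.deleteEdges s).Walk a b) (hq : q.IsPath) :
    ∃ c : G.Walk b b, c.IsCycle ∧ c.length = q.length + 1 := by
  refine ⟨.cons hab.symm (q.mapLe (deleteEdges_le s)), ?_, by simp⟩
  refine (Walk.cons_isCycle_iff _ _).mpr ⟨hq.mapLe _, fun hmem => ?_⟩
  rw [Walk.edges_mapLe_eq_edges, Sym2.eq_swap] at hmem
  exact (edgeSet_deleteEdges s ▸ q.edges_subset_edgeSet hmem).2 he

theorem cycleEdgeSets_mono {G₁ G₂ : SimpleGraph V} (h : G₁ ≤ G₂) (g : ℕ) :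
    cycleEdgeSets G₁ g ⊆ cycleEdgeSets G₂ g := by
  rintro _ ⟨w, c, hc, hlen, rfl⟩
  exact ⟨w, c.mapLe h, hc.mapLe h, by simpa using hlen, by rw [Walk.edges_mapLe_eq_edges]⟩

theorem image_cycleEdgeSets_subset (f : G →g G') (hf : Function.Injective f) (g : ℕ) :
    Set.image (Sym2.map f) '' cycleEdgeSets G g ⊆ cycleEdgeSets G' g := by
  rintro _ ⟨_, ⟨w, c, hc, hlen, rfl⟩, rfl⟩
  refine ⟨f w, c.map f, (Walk.isCycle_map_iff_of_injective hf).mpr hc, by simpa using hlen, ?_⟩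
  ext e
  simp [Walk.edges_map]

theorem ncard_cycleEdgeSets_le [Finite W] (f : G →g G') (hf : Function.Injective f) (g : ℕ) :
    (cycleEdgeSets G g).ncard ≤ (cycleEdgeSets G' g).ncard := by
  rw [← Set.ncard_image_of_injective _ (Set.image_injective.mpr (Sym2.map.injective hf))]
  exact Set.ncard_le_ncard (image_cycleEdgeSets_subset f hf g)

theorem cycleEdgeSets_deleteEdges_ssubset {e : Sym2 V} {g : ℕ}
    (he : ∃ (w : V) (c : G.Walk w w), c.IsCycle ∧ c.length = g ∧ e ∈ c.edges) :
    cycleEdgeSets (G.deleteEdges {e}) g ⊂ cycleEdgeSets G g := by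
  obtain ⟨w, c, hc, hlen, hec⟩ := he
  refine Set.ssubset_iff_of_subset (cycleEdgeSets_mono (deleteEdges_le _) g) |>.mpr
    ⟨_, ⟨w, c, hc, hlen, rfl⟩, ?_⟩
  rintro ⟨w', c', -, -, hcc'⟩
  have hmem : e ∈ (G.deleteEdges {e}).edgeSet :=
    c'.edges_subset_edgeSet (show e ∈ {x | x ∈ c'.edges} from hcc' ▸ hec)
  exact (edgeSet_deleteEdges _ ▸ hmem).2 rfl

end SimpleGraph

section Subdivide

variable {α : Type*} {H : SimpleGraph α} {u v : α}

theorem subdivide_adj_some_some_s11 {a b : α} :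
    (subdivide H u v).Adj (some a) (some b) ↔ (H.deleteEdges {s(u, v)}).Adj a b := by
  simp only [subdivide, fromRel_adj, deleteEdges_adj, Set.mem_singleton_iff, Sym2.eq_iff]
  have := H.adj_comm a b
  aesop

theorem subdivide_adj_none {x : Option α} :
    (subdivide H u v).Adj none x ↔ x = some u ∨ x = some v := by
  simp only [subdivide, fromRel_adj]
  aesop

variable (H u v) in
def subdivideEmbedding : H.deleteEdges {s(u, v)} ↪g subdivide H u v where
  toFun := some
  inj' := Option.some_injective α
  map_rel_iff' := subdivide_adj_some_some_s11

variable (H u v) in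
@[simp]
theorem subdivideEmbedding_apply (a : α) : subdivideEmbedding H u v a = some a := rfl

-- The `copy` keeps the endpoints syntactically `some a`, `some b` (rather than
-- `subdivideEmbedding H u v a`), so that the `Walk.map` API applies by rewriting.
theorem exists_map_subdivideEmbedding_eq {a b : α} (p : (subdivide H u v).Walk (some a) (some b))
    (hp : none ∉ p.support) :
    ∃ q : (H.deleteEdges {s(u, v)}).Walk a b,
      p = (q.map (subdivideEmbedding H u v).toHom).copy
        (subdivideEmbedding_apply H u v a) (subdivideEmbedding_apply H u v b) := by
  have hrange : ∀ z ∈ p.support, z ∈ Set.range (subdivideEmbedding H u v) := by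
    intro z hz
    obtain ⟨c, rfl⟩ := Option.ne_none_iff_exists'.mp (ne_of_mem_of_not_mem hz hp)
    exact ⟨c, rfl⟩
  obtain ⟨q, hq⟩ := p.exists_map_eq_of_support_subset_range _ hrange
    (subdivideEmbedding_apply H u v a) (subdivideEmbedding_apply H u v b)
  exact ⟨q, hq.symm⟩

theorem exists_isCycle_of_isPath_subdivide {a b : α} (hab : H.Adj a b) (he : s(a, b) = s(u, v))
    (r : (subdivide H u v).Walk (some a) (some b)) (hr : r.IsPath) (hn : none ∉ r.support) :
    ∃ c : H.Walk b b, c.IsCycle ∧ c.length = r.length + 1 := by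
  obtain ⟨q, rfl⟩ := exists_map_subdivideEmbedding_eq r hn
  rw [Walk.isPath_copy, Walk.isPath_map_iff_of_injective (subdivideEmbedding H u v).injective] at hr
  rw [Walk.length_copy, Walk.length_map]
  exact Walk.exists_isCycle_cons_of_isPath_deleteEdges hab he q hr

theorem exists_isCycle_length_add_one_of_isCycle_none (huv : H.Adj u v)
    (c : (subdivide H u v).Walk none none) (hc : c.IsCycle) :
    ∃ (w : α) (q : H.Walk w w), q.IsCycle ∧ q.length + 1 = c.length := by
  -- The cycle leaves `none` towards one of `some u`, `some v` and returns from the other; in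
  -- between it is a path from one to the other avoiding `none`, which closes up with `uv`.
  cases c with
  | nil => exact absurd Walk.Nil.nil hc.not_nil
  | @cons _ z _ h₁ p =>
    obtain ⟨hp, hpe⟩ := (Walk.cons_isCycle_iff p h₁).mp hc
    have hp' := hp.reverse
    generalize hrev : p.reverse = p' at hp'
    cases p' with
    | nil => exact absurd h₁ ((subdivide H u v).loopless.irrefl none)
    | @cons _ y _ h₂ r =>
      obtain ⟨hr, hnr⟩ := (Walk.cons_isPath_iff h₂ r).mp hp'
      have hlen : p.length = r.length + 1 := by rw [← Walk.length_reverse, hrev, Walk.length_cons]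
      have hyz : y ≠ z := by
        rintro rfl
        have hmem : s(none, y) ∈ p.reverse.edges := by simp [hrev]
        exact hpe (by simpa using hmem)
      rcases subdivide_adj_none.mp h₁ with rfl | rfl <;>
        rcases subdivide_adj_none.mp h₂ with rfl | rfl
      · exact absurd rfl hyz
      · obtain ⟨q, hq, hqlen⟩ := exists_isCycle_of_isPath_subdivide huv.symm Sym2.eq_swap r hr hnr
        exact ⟨u, q, hq, by simp [hlen, hqlen]⟩
      · obtain ⟨q, hq, hqlen⟩ := exists_isCycle_of_isPath_subdivide huv rfl r hr hnr
        exact ⟨v, q, hq, by simp [hlen, hqlen]⟩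
      · exact absurd rfl hyz

theorem exists_isCycle_length_add_one_of_none_mem_support (huv : H.Adj u v) {x : Option α}
    (c : (subdivide H u v).Walk x x) (hc : c.IsCycle) (hn : none ∈ c.support) :
    ∃ (w : α) (q : H.Walk w w), q.IsCycle ∧ q.length + 1 = c.length := by
  classical
  simpa using exists_isCycle_length_add_one_of_isCycle_none huv _ (hc.rotate hn)

theorem edges_mem_image_cycleEdgeSets_of_none_notMem_support {x : Option α}
    (c : (subdivide H u v).Walk x x) (hc : c.IsCycle) (hn : none ∉ c.support) :
    {e | e ∈ c.edges} ∈
      Set.image (Sym2.map some) '' cycleEdgeSets (H.deleteEdges {s(u, v)}) c.length := by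
  obtain ⟨a, rfl⟩ := Option.ne_none_iff_exists'.mp (ne_of_mem_of_not_mem c.start_mem_support hn)
  obtain ⟨q, rfl⟩ := exists_map_subdivideEmbedding_eq c hn
  rw [Walk.isCycle_copy, Walk.isCycle_map_iff_of_injective (subdivideEmbedding H u v).injective] at hc
  refine ⟨_, ⟨a, q, hc, by rw [Walk.length_copy, Walk.length_map], rfl⟩, ?_⟩
  ext e
  rw [Set.mem_image, Set.mem_ofPred_eq, Walk.edges_copy, Walk.edges_map, List.mem_map]
  rfl

theorem egirth_le_egirth_subdivide (huv : H.Adj u v) : H.egirth ≤ (subdivide H u v).egirth := by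
  refine le_egirth.mpr fun x c hc => ?_
  by_cases hn : none ∈ c.support
  · obtain ⟨w, q, hq, hlen⟩ := exists_isCycle_length_add_one_of_none_mem_support huv c hc hn
    calc H.egirth ≤ q.length := egirth_le_length hq
      _ ≤ c.length := by rw [← hlen]; exact_mod_cast Nat.le_succ _
  · obtain ⟨_, ⟨w, q, hq, hlen, -⟩, -⟩ :=
      edges_mem_image_cycleEdgeSets_of_none_notMem_support c hc hn
    calc H.egirth ≤ (H.deleteEdges {s(u, v)}).egirth := egirth_anti (deleteEdges_le _)
      _ ≤ c.length := hlen ▸ egirth_le_length hq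

theorem none_notMem_support_of_length_le_egirth (huv : H.Adj u v) {x : Option α}
    (c : (subdivide H u v).Walk x x) (hc : c.IsCycle) (hlen : (c.length : ℕ∞) ≤ H.egirth) :
    none ∉ c.support := by
  intro hn
  obtain ⟨w, q, hq, hqlen⟩ := exists_isCycle_length_add_one_of_none_mem_support huv c hc hn
  have : c.length ≤ q.length := by exact_mod_cast hlen.trans (egirth_le_length hq)
  omega

theorem cycleEdgeSets_subdivide_subset (huv : H.Adj u v) {g : ℕ} (hg : (g : ℕ∞) ≤ H.egirth) :
    cycleEdgeSets (subdivide H u v) g ⊆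
      Set.image (Sym2.map some) '' cycleEdgeSets (H.deleteEdges {s(u, v)}) g := by
  rintro _ ⟨x, c, hc, rfl, rfl⟩
  exact edges_mem_image_cycleEdgeSets_of_none_notMem_support c hc
    (none_notMem_support_of_length_le_egirth huv c hc hg)

theorem not_isAcyclic_subdivide
    (hcyc : ∃ (w : α) (c : H.Walk w w), c.IsCycle ∧ s(u, v) ∈ c.edges) :
    ¬ (subdivide H u v).IsAcyclic := by
  classical
  obtain ⟨huv, ⟨q⟩⟩ := adj_and_reachable_delete_edges_iff_exists_cycle.mpr hcyc
  obtain ⟨r, hr, hnr⟩ : ∃ r : (subdivide H u v).Walk (some u) (some v),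
      r.IsPath ∧ none ∉ r.support := by
    refine ⟨(q.toPath.1.map (subdivideEmbedding H u v).toHom).copy
      (subdivideEmbedding_apply H u v u) (subdivideEmbedding_apply H u v v), ?_, ?_⟩
    · rw [Walk.isPath_copy]
      exact q.toPath.2.map (subdivideEmbedding H u v).injective
    · rw [Walk.support_copy, Walk.support_map]
      simp
  have h₁ : (subdivide H u v).Adj none (some u) := subdivide_adj_none.mpr (Or.inl rfl)
  have h₂ : (subdivide H u v).Adj (some v) none := (subdivide_adj_none.mpr (Or.inr rfl)).symm
  refine fun hacyc => hacyc (Walk.cons h₁ (r.concat h₂)) ?_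
  refine (Walk.cons_isCycle_iff _ h₁).mpr ⟨hr.concat hnr h₂, ?_⟩
  rw [Walk.edges_concat, List.concat_eq_append, List.mem_append, List.mem_singleton]
  rintro (he | he)
  · exact hnr (r.fst_mem_support_of_mem_edges he)
  · simp [huv.ne] at he

end Subdivide

/-- Let `H` have girth `g`, and let `uv` be an edge of `H` lying on some cycle of length `g`.
Let `Q` be obtained from `H` by subdividing `uv` once.  Then `Q` has strictly fewer cycles of
length `g` than `H`, the girth of `Q` is at least `g`, and consequently `Q` contains no
subgraph isomorphic to `H` — in particular, no induced subgraph isomorphic to `H`. -/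
theorem subdividing_girth_edge_destroys_H
    {α : Type*} [Fintype α] (H : SimpleGraph α) (g : ℕ)
    (hg : H.girth = (g : ℕ∞))
    (u v : α) (huv : H.Adj u v)
    (hcyc : ∃ (w : α) (c : H.Walk w w), c.IsCycle ∧ c.length = g ∧ s(u, v) ∈ c.edges) :
    (cycleEdgeSets (subdivide H u v) g).ncard < (cycleEdgeSets H g).ncard ∧
    (g : ℕ∞) ≤ (subdivide H u v).girth ∧
    (¬ ∃ f : α → Option α, Function.Injective f ∧
        ∀ p q : α, H.Adj p q → (subdivide H u v).Adj (f p) (f q)) ∧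
    IsEmpty (H ↪g subdivide H u v) := by
  obtain ⟨w, c, hc, hlen, huvc⟩ := hcyc
  have hg' : H.girth = g := by exact_mod_cast hg
  have hg_le : (g : ℕ∞) ≤ H.egirth := hg' ▸ H.egirth.natCast_toNat_le_self
  have hcount : (cycleEdgeSets (subdivide H u v) g).ncard < (cycleEdgeSets H g).ncard :=
    calc (cycleEdgeSets (subdivide H u v) g).ncard
        ≤ (Set.image (Sym2.map some) '' cycleEdgeSets (H.deleteEdges {s(u, v)}) g).ncard :=
          Set.ncard_le_ncard (cycleEdgeSets_subdivide_subset huv hg_le)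
      _ ≤ (cycleEdgeSets (H.deleteEdges {s(u, v)}) g).ncard := Set.ncard_image_le
      _ < (cycleEdgeSets H g).ncard :=
          Set.ncard_lt_ncard (cycleEdgeSets_deleteEdges_ssubset ⟨w, c, hc, hlen, huvc⟩)
  have hgirth : H.girth ≤ (subdivide H u v).girth :=
    ENat.toNat_le_toNat (egirth_le_egirth_subdivide huv)
      (egirth_eq_top.not.mpr (not_isAcyclic_subdivide ⟨w, c, hc, huvc⟩))
  have hnoCopy : ¬ ∃ f : α → Option α, Function.Injective f ∧
      ∀ p q : α, H.Adj p q → (subdivide H u v).Adj (f p) (f q) := fun ⟨f, hf, hadj⟩ =>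
    (ncard_cycleEdgeSets_le ⟨f, hadj _ _⟩ hf g).not_gt hcount
  exact ⟨hcount, by exact_mod_cast hg' ▸ hgirth, hnoCopy,
    ⟨fun e => hnoCopy ⟨e, e.injective, fun _ _ => e.map_adj_iff.mpr⟩⟩⟩
end
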